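/- For the transformed Leipnik unit deviance d(y;μ) = log(1 + (y−μ)²/(y(1−y))) on (0,1) × (0,1): d(y,y) = 0, d(y,μ) > 0 for y ≠ μ, ∂²_{yy} d(μ;μ) = 2/(μ(1−μ)), and ∂³_{yyy} d(μ;μ) = 6(2μ−1)/(μ(1−μ))². -/

import Mathlib

/-!
Clearing denominators, `1 + (y - μ)² / (y (1 - y)) = ((1 - 2μ) y + μ²) / (y (1 - y))`, so on `(0, 1)`
the deviance is `log ((1 - 2μ) y + μ²) - log y - log (1 - y)`, a sum of logarithms of affine
functions. The `(k+1)`-st derivative of `log (c y + d)` is `(-1)^k k! c^(k+1) / (c y + d)^(k+1)`,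
and at `y = μ` the first denominator becomes `(1 - 2μ) μ + μ² = μ (1 - μ)`.
-/

open Real Filter Topology
open scoped Nat

/-- `leipnikDeviance μ y` is the paper's `d(y; μ)`. -/
noncomputable def leipnikDeviance (μ y : ℝ) : ℝ := log (1 + (y - μ) ^ 2 / (y * (1 - y)))

lemma contDiffAt_log_affine {c d x : ℝ} {n : WithTop ℕ∞} (h : c * x + d ≠ 0) :
    ContDiffAt ℝ n (fun y => log (c * y + d)) x :=
  ((contDiffAt_id.const_smul c).add contDiffAt_const).log h

lemma iteratedDeriv_succ_log_affine {c d x : ℝ} (h : 0 < c * x + d) (k : ℕ) :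
    iteratedDeriv (k + 1) (fun y => log (c * y + d)) x
      = (-1) ^ k * k ! * c ^ (k + 1) / (c * x + d) ^ (k + 1) := by
  have hderiv : deriv (fun y => log (c * y + d)) =ᶠ[𝓝 x] fun y => c * (c * y + d)⁻¹ := by
    have hcont : ContinuousAt (fun y => c * y + d) x := by fun_prop
    filter_upwards [hcont.eventually (lt_mem_nhds h)] with y hy
    have := (((hasDerivAt_id y).const_mul c).add_const d).log hy.ne'
    simp only [mul_one, id] at this
    rw [this.deriv, div_eq_mul_inv]
  rw [iteratedDeriv_succ', hderiv.iteratedDeriv_eq, iteratedDeriv_const_mul_field,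
    iteratedDeriv_eq_iterate, iter_deriv_inv_linear]
  rw [show (-1 - k : ℤ) = -((k + 1 : ℕ) : ℤ) by push_cast; ring]
  simp only [zpow_neg, zpow_natCast]
  ring

lemma one_add_sq_div_eq (μ y : ℝ) (hy : y * (1 - y) ≠ 0) :
    1 + (y - μ) ^ 2 / (y * (1 - y)) = ((1 - 2 * μ) * y + μ ^ 2) / (y * (1 - y)) := by
  rw [eq_div_iff hy, add_mul, div_mul_cancel₀ _ hy]
  ring

-- The three logarithms are written as `log (c * y + d)` to match `iteratedDeriv_succ_log_affine`.
lemma leipnikDeviance_eq {μ y : ℝ} (hy : y ∈ Set.Ioo (0 : ℝ) 1) :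
    leipnikDeviance μ y = log ((1 - 2 * μ) * y + μ ^ 2) - log (1 * y + 0) - log (-1 * y + 1) := by
  obtain ⟨hy0, hy1⟩ := hy
  have hpos : 0 < y * (1 - y) := mul_pos hy0 (by linarith)
  -- `(1 - 2μ) y + μ² = y (1 - y) + (y - μ)²`
  have hnum : 0 < (1 - 2 * μ) * y + μ ^ 2 := by nlinarith [sq_nonneg (y - μ)]
  rw [leipnikDeviance, one_add_sq_div_eq μ y hpos.ne', log_div hnum.ne' hpos.ne',
    log_mul hy0.ne' (by linarith)]
  ring_nf

lemma iteratedDeriv_succ_leipnikDeviance {μ : ℝ} (hμ : μ ∈ Set.Ioo (0 : ℝ) 1) (k : ℕ) :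
    iteratedDeriv (k + 1) (leipnikDeviance μ) μ
      = (-1) ^ k * k ! * ((1 - 2 * μ) ^ (k + 1) / (μ * (1 - μ)) ^ (k + 1)
          - 1 / μ ^ (k + 1) - (-1) ^ (k + 1) / (1 - μ) ^ (k + 1)) := by
  obtain ⟨hμ0, hμ1⟩ := hμ
  have hnum : 0 < (1 - 2 * μ) * μ + μ ^ 2 := by nlinarith
  have h1 : 0 < 1 * μ + 0 := by linarith
  have h2 : 0 < -1 * μ + 1 := by linarith
  have hlocal : leipnikDeviance μ =ᶠ[𝓝 μ] fun y =>
      log ((1 - 2 * μ) * y + μ ^ 2) - log (1 * y + 0) - log (-1 * y + 1) := by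
    filter_upwards [isOpen_Ioo.mem_nhds ⟨hμ0, hμ1⟩] with y hy using leipnikDeviance_eq hy
  have hd₁ := contDiffAt_log_affine (n := k + 1) hnum.ne'
  have hd₂ := contDiffAt_log_affine (n := k + 1) h1.ne'
  have hd₃ := contDiffAt_log_affine (n := k + 1) h2.ne'
  rw [hlocal.iteratedDeriv_eq, iteratedDeriv_fun_sub (hd₁.sub hd₂) hd₃,
    iteratedDeriv_fun_sub hd₁ hd₂, iteratedDeriv_succ_log_affine hnum,
    iteratedDeriv_succ_log_affine h1, iteratedDeriv_succ_log_affine h2,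
    show (1 - 2 * μ) * μ + μ ^ 2 = μ * (1 - μ) by ring]
  ring

lemma leipnikDeviance_self (y : ℝ) : leipnikDeviance y y = 0 := by
  simp [leipnikDeviance]

lemma leipnikDeviance_pos {μ y : ℝ} (hy : y ∈ Set.Ioo (0 : ℝ) 1) (hne : y ≠ μ) :
    0 < leipnikDeviance μ y := by
  have hden : 0 < y * (1 - y) := mul_pos hy.1 (by linarith [hy.2])
  have hnum : 0 < (y - μ) ^ 2 := sq_pos_of_ne_zero (sub_ne_zero.mpr hne)
  exact log_pos (lt_add_of_pos_right 1 (div_pos hnum hden))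

/-- For the transformed Leipnik unit deviance
`d(y;μ) = log(1 + (y−μ)²/(y(1−y)))` on `(0,1) × (0,1)`: `d(y,y)=0`,
`d(y,μ)>0` for `y ≠ μ`, `∂²_{yy} d(μ;μ) = 2/(μ(1−μ))`,
`∂³_{yyy} d(μ;μ) = 6(2μ−1)/(μ(1−μ))²`. -/
theorem transformed_leipnik_deviance_props :
    (∀ y : ℝ, y ∈ Set.Ioo (0 : ℝ) 1 →
      Real.log (1 + (y - y) ^ 2 / (y * (1 - y))) = 0) ∧
    (∀ y μ : ℝ, y ∈ Set.Ioo (0 : ℝ) 1 → μ ∈ Set.Ioo (0 : ℝ) 1 → y ≠ μ →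
      0 < Real.log (1 + (y - μ) ^ 2 / (y * (1 - y)))) ∧
    (∀ μ : ℝ, μ ∈ Set.Ioo (0 : ℝ) 1 →
      iteratedDeriv 2
        (fun y : ℝ => Real.log (1 + (y - μ) ^ 2 / (y * (1 - y)))) μ
        = 2 / (μ * (1 - μ)) ∧
      iteratedDeriv 3
        (fun y : ℝ => Real.log (1 + (y - μ) ^ 2 / (y * (1 - y)))) μ
        = 6 * (2 * μ - 1) / (μ * (1 - μ)) ^ 2) := by
  refine ⟨fun y _ => leipnikDeviance_self y, fun y μ hy _ hne => leipnikDeviance_pos hy hne,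
    fun μ hμ => ⟨(iteratedDeriv_succ_leipnikDeviance hμ 1).trans ?_,
      (iteratedDeriv_succ_leipnikDeviance hμ 2).trans ?_⟩⟩
  all_goals
    field_simp [hμ.1.ne', sub_ne_zero.mpr hμ.2.ne']
    ring
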